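/- For f(n) = (-1)^{n+1} and positive integers N, H, the modified Selberg integral J̃_f(N,H) := ∑_{N < x ≤ 2N} |∑_{|n-x| ≤ H} (1 - |n-x|/H) f(n)|² equals N/H² if H is odd and 0 if H is even. -/

import Mathlib

/-!
Shifting `n = x + k` turns the inner sum into `(-1)^(x+1)/H` times the alternating Fejér sum
`∑_{|k| ≤ H} (H - |k|) (-1)^k`. Since `H + 1 - |k| = (H - |k|) + 1` and the weights vanish at
`k = ±(H + 1)`, that sum grows by `∑_{|k| ≤ H} (-1)^k = (-1)^H` when `H` increases by one, so it is
`1` for odd `H` and `0` for even `H`. Every summand of the outer sum is therefore `[H odd] / H²`.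
-/

open Finset

theorem Finset.sum_Icc_neg_natCast_succ {M : Type*} [AddCommMonoid M] (f : ℤ → M) (n : ℕ) :
    ∑ k ∈ Icc (-((n + 1 : ℕ) : ℤ)) (n + 1 : ℕ), f k
      = f (-(n + 1)) + f (n + 1) + ∑ k ∈ Icc (-(n : ℤ)) n, f k := by
  have hIcc : Icc (-((n + 1 : ℕ) : ℤ)) (n + 1 : ℕ)
      = insert (-((n : ℤ) + 1)) (insert ((n : ℤ) + 1) (Icc (-(n : ℤ)) n)) := by
    ext k; simp only [mem_Icc, mem_insert]; omega
  rw [hIcc, sum_insert (by simp; omega), sum_insert (by simp), add_assoc]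

section NegOneZPow

variable {R : Type*} [DivisionRing R]

theorem sum_Icc_neg_one_zpow (n : ℕ) : ∑ k ∈ Icc (-(n : ℤ)) n, (-1 : R) ^ k = (-1) ^ n := by
  induction n with
  | zero => simp
  | succ n ih =>
    rw [sum_Icc_neg_natCast_succ, ih, zpow_neg, ← Nat.cast_succ, zpow_natCast, pow_succ]
    rcases neg_one_pow_eq_or R n with h | h <;> simp [h]

theorem sum_Icc_fejer_mul_neg_one_zpow (n : ℕ) :
    ∑ k ∈ Icc (-(n : ℤ)) n, ((n : R) - ((|k| : ℤ) : R)) * (-1 : R) ^ k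
      = if Odd n then 1 else 0 := by
  induction n with
  | zero => simp
  | succ n ih =>
    have hweight : ∀ k : ℤ, ((n + 1 : ℕ) : R) - ((|k| : ℤ) : R)
        = ((n : R) - ((|k| : ℤ) : R)) + 1 := fun k => by push_cast; abel
    have hedge : ((n + 1 : ℕ) : R) - ((|(n : ℤ) + 1| : ℤ) : R) = 0 := by
      rw [abs_of_nonneg (by positivity)]; push_cast; abel
    rw [sum_Icc_neg_natCast_succ, abs_neg, hedge]
    simp only [hweight, add_mul, one_mul, sum_add_distrib, ih, sum_Icc_neg_one_zpow]
    rcases Nat.even_or_odd n with h | h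
    · simp [h.neg_one_pow, Nat.odd_add_one, Nat.not_odd_iff_even.2 h]
    · simp [h.neg_one_pow, Nat.odd_add_one, h]

end NegOneZPow

theorem sum_Icc_fejer_centered_mul_neg_one_zpow_add_one {K : Type*} [Field K] [CharZero K]
    (H : ℕ) (hH : 0 < H) (x : ℤ) :
    ∑ n ∈ Icc (x - H) (x + H), (1 - ((|n - x| : ℤ) : K) / H) * (-1 : K) ^ (n + 1)
      = (-1 : K) ^ (x + 1) * (if Odd H then 1 else 0) / H := by
  have hH₀ : (H : K) ≠ 0 := by exact_mod_cast hH.ne'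
  have hshift : Icc (x - H) (x + H) = (Icc (-(H : ℤ)) H).map (addLeftEmbedding x) := by
    rw [map_add_left_Icc, sub_eq_add_neg]
  have hterm : ∀ k : ℤ, (1 - ((|x + k - x| : ℤ) : K) / H) * (-1 : K) ^ (x + k + 1)
      = (-1 : K) ^ (x + 1) / H * (((H : K) - ((|k| : ℤ) : K)) * (-1 : K) ^ k) := fun k => by
    rw [add_sub_cancel_left, add_right_comm, zpow_add₀ (by norm_num)]
    field_simp
  simp only [hshift, sum_map, addLeftEmbedding_apply, hterm, ← mul_sum,
    sum_Icc_fejer_mul_neg_one_zpow]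
  ring

theorem modified_selberg_integral_of_eta_general (N H : ℕ) (hH : 0 < H) :
    ∑ x ∈ Finset.Icc ((N : ℤ) + 1) (2 * N),
      (∑ n ∈ Finset.Icc (x - H) (x + H),
        (1 - ((|n - x| : ℤ) : ℝ) / (H : ℝ)) * ((-1 : ℝ))^(n + 1))^2
    = if Odd H then (N : ℝ) / (H : ℝ)^2 else 0 := by
  have hterm : ∀ x : ℤ,
      (∑ n ∈ Icc (x - H) (x + H), (1 - ((|n - x| : ℤ) : ℝ) / H) * (-1 : ℝ) ^ (n + 1)) ^ 2
        = (if Odd H then 1 else 0) / (H : ℝ) ^ 2 := fun x => by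
    rw [sum_Icc_fejer_centered_mul_neg_one_zpow_add_one H hH, div_pow, mul_pow,
      sq ((-1 : ℝ) ^ (x + 1)), ← zpow_add₀ (by norm_num), (Even.add_self _).neg_one_zpow]
    split_ifs <;> simp
  have hcard : #(Icc ((N : ℤ) + 1) (2 * N)) = N := by
    rw [Int.card_Icc]; omega
  rw [sum_congr rfl fun x _ => hterm x, sum_const, hcard, nsmul_eq_mul]
  split_ifs <;> ring

/-- For `f(n) = (-1)^(n+1)`, the modified Selberg integral
`∑_{N < x ≤ 2N} |∑_{|n-x| ≤ H} (1 - |n-x|/H) f(n)|²` equals `N/H²` if `H` is odd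
and `0` if `H` is even. -/
theorem modified_selberg_integral_of_eta (N H : ℕ) (hN : 0 < N) (hH : 0 < H) :
    ∑ x ∈ Finset.Icc ((N : ℤ) + 1) (2 * N),
      (∑ n ∈ Finset.Icc (x - H) (x + H),
        (1 - ((|n - x| : ℤ) : ℝ) / (H : ℝ)) * ((-1 : ℝ))^(n + 1))^2
    = if Odd H then (N : ℝ) / (H : ℝ)^2 else 0 :=
  modified_selberg_integral_of_eta_general N H hH
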